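/- Transitivity and marginal-reduction properties of the alternative embedding: let A ⊆ [n] with |A| ≥ 2 and π ∈ Γ(A). (1) For all subsets A', C with A ⊆ A' ⊆ C ⊆ [n] and |A'| ≥ 2: φ'_C(φ'_{A'} δ_π) = φ'_C δ_π. (2) For all subsets B, C ⊆ [n] with |B| ≥ 2 and A ∪ B ⊆ C: M_B(φ'_C δ_π) = M_B(φ'_{A∪B} δ_π). -/

import Mathlib

open Finset
open scoped List

abbrev Word (n : ℕ) := List (Fin n)

/-- `Γ(A)`: duplicate-free words whose set of letters is exactly `A`. -/
noncomputable def rankings (n : ℕ) (A : Finset (Fin n)) : Finset (Word n) :=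
  A.toList.permutations.toFinset

/-- All duplicate-free words on `[n]`. -/
noncomputable def allWords (n : ℕ) : Finset (Word n) :=
  Finset.univ.biUnion fun A : Finset (Fin n) => rankings n A

def IsRanking {n : ℕ} (A : Finset (Fin n)) (w : Word n) : Prop :=
  w.Nodup ∧ w.toFinset = A

instance {n : ℕ} (A : Finset (Fin n)) (w : Word n) : Decidable (IsRanking A w) :=
  inferInstanceAs (Decidable (w.Nodup ∧ w.toFinset = A))

/-- Membership in `L(Γ(A))`: functions supported on `Γ(A)`. -/
def MemL {n : ℕ} (A : Finset (Fin n)) (F : Word n → ℝ) : Prop :=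
  ∀ w, F w ≠ 0 → IsRanking A w

/-- Marginal operator `M_B` (with the convention `M_∅ F = (Σ F)·δ_0̄`). -/
noncomputable def marg {n : ℕ} (B : Finset (Fin n)) (F : Word n → ℝ) : Word n → ℝ :=
  fun π => if IsRanking B π then ∑ σ ∈ allWords n, (if π <+ σ then F σ else 0) else 0

/-- Membership in the localization space `H_B` (for `B = ∅` this is `L(Γ(∅)) = ℝ·δ_0̄`). -/
def MemH {n : ℕ} (B : Finset (Fin n)) (F : Word n → ℝ) : Prop :=
  MemL B F ∧
    (∀ B' : Finset (Fin n), B' ⊂ B → 2 ≤ B'.card → marg B' F = 0) ∧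
    (2 ≤ B.card → ∑ π ∈ rankings n B, F π = 0)

/-- `P̄(A) = {B ⊆ A : |B| ≥ 2} ∪ {∅}`. -/
def Pbar {n : ℕ} (A : Finset (Fin n)) : Finset (Finset (Fin n)) :=
  A.powerset.filter fun B => 2 ≤ B.card ∨ B = ∅

/-- Synthesis operator `φ_A`. -/
noncomputable def synth {n : ℕ} (A : Finset (Fin n)) (F : Word n → ℝ) : Word n → ℝ :=
  fun σ =>
    if IsRanking A σ then
      F [] / (Nat.factorial A.card : ℝ) +
        ∑ π ∈ allWords n,
          (if π ≠ [] ∧ π <:+: σ then F π / (Nat.factorial (A.card - π.length + 1) : ℝ) else 0)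
    else 0

/-- Dirac function `δ_π`. -/
noncomputable def dirac {n : ℕ} (π : Word n) : Word n → ℝ :=
  fun w => if w = π then 1 else 0

/-- `σ|_C`: the induced word of `σ` on `C`. -/
def restrictWord {n : ℕ} (σ : Word n) (C : Finset (Fin n)) : Word n :=
  σ.filter fun a => decide (a ∈ C)

/-- The alternative embedding `φ'_B`: `φ'_B δ_π = (|π|!/|B|!)·1_{{σ ∈ Γ(B) : π ⊂ σ}}`. -/
noncomputable def synth' {n : ℕ} (B : Finset (Fin n)) (F : Word n → ℝ) : Word n → ℝ :=
  fun σ =>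
    if IsRanking B σ then
      ∑ π ∈ allWords n,
        (if π <+ σ then ((Nat.factorial π.length : ℝ) / (Nat.factorial B.card : ℝ)) * F π else 0)
    else 0

/-!
A ranking `σ` of `C` has exactly one subword that is a ranking of a given `D ⊆ C`, namely its
restriction `σ|_D`; and a ranking of `D` has exactly `|C|!/|D|!` extensions in `Γ(C)`, since a
new letter can be inserted into a word of length `k` in `k + 1` ways. The first fact collapses
the sum defining `φ'_C (φ'_{A'} δ_π)(σ)` to its single term `σ|_{A'}`, which gives (1). For (2),
`M_B (φ'_C δ_π)(τ)` counts the rankings of `C` containing both `π` and `τ`; these are exactly the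
extensions of the rankings of `A ∪ B` containing both, so the count is `|C|!/|A ∪ B|!` times the
corresponding count for `A ∪ B`, and this factor cancels the normalisation of `φ'`.
-/

open Nat

variable {n : ℕ}

lemma mem_rankings {A : Finset (Fin n)} {w : Word n} : w ∈ rankings n A ↔ IsRanking A w := by
  rw [rankings, List.mem_toFinset, List.mem_permutations]
  refine ⟨fun h => ⟨h.symm.nodup A.nodup_toList, ?_⟩, fun ⟨hw, hA⟩ => ?_⟩
  · rw [List.toFinset_eq_of_perm _ _ h, Finset.toList_toFinset]
  · rw [← hA]
    exact (List.toFinset_toList hw).symm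

lemma mem_allWords {w : Word n} : w ∈ allWords n ↔ w.Nodup := by
  simp only [allWords, mem_biUnion, mem_univ, true_and, mem_rankings]
  exact ⟨fun ⟨_, hw⟩ => hw.1, fun hw => ⟨_, hw, rfl⟩⟩

lemma filter_isRanking_allWords (C : Finset (Fin n)) :
    (allWords n).filter (IsRanking C) = rankings n C := by
  ext w
  rw [mem_filter, mem_allWords, mem_rankings]
  exact ⟨And.right, fun hw => ⟨hw.1, hw⟩⟩

namespace IsRanking

variable {A : Finset (Fin n)} {w : Word n}

lemma length_eq (hw : IsRanking A w) : w.length = #A := by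
  rw [← hw.2, List.toFinset_card_of_nodup hw.1]

lemma mem_iff {a : Fin n} (hw : IsRanking A w) : a ∈ w ↔ a ∈ A := by
  rw [← hw.2, List.mem_toFinset]

end IsRanking

lemma isRanking_restrictWord {B C : Finset (Fin n)} {σ : Word n} (hσ : IsRanking C σ)
    (hBC : B ⊆ C) : IsRanking B (restrictWord σ B) := by
  refine ⟨hσ.1.filter _, ?_⟩
  ext a
  simp only [restrictWord, List.mem_toFinset, List.mem_filter, decide_eq_true_eq,
    and_iff_right_iff_imp]
  intro ha
  exact List.mem_toFinset.mp (hσ.2 ▸ hBC ha)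

lemma restrictWord_sublist (σ : Word n) (B : Finset (Fin n)) : restrictWord σ B <+ σ :=
  List.filter_sublist

lemma sublist_restrictWord_iff {B : Finset (Fin n)} {π σ : Word n} (hπ : ∀ a ∈ π, a ∈ B) :
    π <+ restrictWord σ B ↔ π <+ σ := by
  refine ⟨fun h => h.trans (restrictWord_sublist σ B), fun h => ?_⟩
  have hπB : π.filter (fun a => decide (a ∈ B)) = π := List.filter_eq_self.mpr (by simpa using hπ)
  exact hπB ▸ h.filter _

lemma IsRanking.eq_restrictWord_of_sublist {B : Finset (Fin n)} {τ σ : Word n}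
    (hτ : IsRanking B τ) (hσ : σ.Nodup) (hτσ : τ <+ σ) : τ = restrictWord σ B := by
  have hres : IsRanking B (restrictWord σ B) :=
    isRanking_restrictWord ⟨hσ, rfl⟩ fun _ ha =>
      List.mem_toFinset.mpr (hτσ.subset (hτ.mem_iff.mpr ha))
  refine (hσ.perm_iff_eq_of_sublist hτσ (l₂ := restrictWord σ B) (restrictWord_sublist σ B)).mp ?_
  rw [List.perm_ext_iff_of_nodup hτ.1 hres.1]
  intro a
  rw [← List.mem_toFinset, ← List.mem_toFinset (l := restrictWord σ B), hτ.2, hres.2]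

/-- `{σ ∈ Γ(C) : ρ ⊂ σ}`. -/
noncomputable def extensions (C : Finset (Fin n)) (ρ : Word n) : Finset (Word n) :=
  (rankings n C).filter (ρ <+ ·)

section extensions

variable {C D : Finset (Fin n)} {ρ σ : Word n}

lemma mem_extensions : σ ∈ extensions C ρ ↔ IsRanking C σ ∧ ρ <+ σ := by
  rw [extensions, mem_filter, mem_rankings]

lemma extensions_self (hρ : IsRanking D ρ) : extensions D ρ = {ρ} := by
  ext σ
  rw [mem_extensions, mem_singleton]
  refine ⟨fun ⟨hσ, hρσ⟩ => ?_, by rintro rfl; exact ⟨hρ, List.Sublist.refl _⟩⟩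
  exact (hσ.eq_restrictWord_of_sublist hσ.1 (List.Sublist.refl _)).trans
    (hρ.eq_restrictWord_of_sublist hσ.1 hρσ).symm

lemma extensions_insert_eq_image {x : Fin n} (hx : x ∉ D) (hρ : IsRanking D ρ) :
    extensions (insert x D) ρ = (range (ρ.length + 1)).image (ρ.insertIdx · x) := by
  have hxρ : x ∉ ρ := fun h => hx (hρ.mem_iff.mp h)
  ext σ
  rw [mem_extensions, mem_image]
  constructor
  · rintro ⟨hσ, hρσ⟩
    have hxσ : x ∈ σ := List.mem_toFinset.mp (hσ.2 ▸ mem_insert_self x D)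
    set i := σ.idxOf x
    have hi : i < σ.length := List.idxOf_lt_length_of_mem hxσ
    have hσi : (σ.eraseIdx i).insertIdx i x = σ := by
      conv_rhs => rw [← List.insertIdx_eraseIdx_getElem hi]
      rw [List.getElem_idxOf]
    have hperm : σ ~ x :: σ.eraseIdx i := by
      have := List.perm_insertIdx x (σ.eraseIdx i) (i := i)
        (by rw [List.length_eraseIdx_of_lt hi]; omega)
      rwa [hσi] at this
    have hxrest : x ∉ σ.eraseIdx i := (List.nodup_cons.mp (hperm.nodup_iff.mp hσ.1)).1
    have hrest : IsRanking D (σ.eraseIdx i) := by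
      refine ⟨hσ.1.sublist (List.eraseIdx_sublist _ _), ?_⟩
      rw [← erase_insert (s := D) hx, ← hσ.2, List.toFinset_eq_of_perm _ _ hperm,
        List.toFinset_cons, erase_insert (by simpa using hxrest)]
    have hρi : ρ = σ.eraseIdx i := by
      rw [hρ.eq_restrictWord_of_sublist hσ.1 hρσ,
        hrest.eq_restrictWord_of_sublist hσ.1 (List.eraseIdx_sublist _ _)]
    refine ⟨i, mem_range.mpr ?_, hρi ▸ hσi⟩
    rw [hρi, List.length_eraseIdx_of_lt hi]
    omega
  · rintro ⟨i, hi, rfl⟩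
    have hperm := List.perm_insertIdx x ρ (Nat.lt_succ_iff.mp (mem_range.mp hi))
    refine ⟨⟨hperm.nodup_iff.mpr (List.nodup_cons.mpr ⟨hxρ, hρ.1⟩), ?_⟩,
      List.sublist_insertIdx ρ i x⟩
    rw [List.toFinset_eq_of_perm _ _ hperm, List.toFinset_cons, hρ.2]

lemma card_extensions_insert {x : Fin n} (hx : x ∉ D) (hρ : IsRanking D ρ) :
    #(extensions (insert x D) ρ) = #D + 1 := by
  rw [extensions_insert_eq_image hx hρ, Finset.card_image_of_injOn, card_range, hρ.length_eq]
  intro i hi j hj hij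
  exact List.injOn_insertIdx_index_of_notMem ρ x (fun h => hx (hρ.mem_iff.mp h))
    (Nat.lt_succ_iff.mp (mem_range.mp hi)) (Nat.lt_succ_iff.mp (mem_range.mp hj)) hij

lemma card_filter_rankings_eq_sum_card_extensions (hDC : D ⊆ C) (p : Word n → Prop)
    [DecidablePred p] (hp : ∀ σ, IsRanking C σ → (p σ ↔ p (restrictWord σ D))) :
    #((rankings n C).filter p) = ∑ ρ ∈ (rankings n D).filter p, #(extensions C ρ) := by
  rw [card_eq_sum_card_fiberwise (f := (restrictWord · D)) (t := (rankings n D).filter p)]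
  · refine sum_congr rfl fun ρ hρ => congrArg card ?_
    rw [mem_filter, mem_rankings] at hρ
    ext σ
    rw [mem_filter, mem_filter, mem_rankings, mem_extensions]
    constructor
    · rintro ⟨⟨hσ, -⟩, rfl⟩
      exact ⟨hσ, restrictWord_sublist σ D⟩
    · rintro ⟨hσ, hρσ⟩
      have hρ_eq := hρ.1.eq_restrictWord_of_sublist hσ.1 hρσ
      exact ⟨⟨hσ, (hp σ hσ).mpr (hρ_eq ▸ hρ.2)⟩, hρ_eq.symm⟩
  · intro σ hσ
    simp only [coe_filter, mem_rankings, Set.mem_ofPred_eq] at hσ ⊢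
    exact ⟨isRanking_restrictWord hσ.1 hDC, (hp σ hσ.1).mp hσ.2⟩

lemma card_extensions_mul_factorial (hDC : D ⊆ C) (hρ : IsRanking D ρ) :
    #(extensions C ρ) * (#D)! = (#C)! := by
  obtain ⟨E, rfl⟩ : ∃ E, C = D ∪ E := ⟨C, (union_eq_right.mpr hDC).symm⟩
  clear hDC
  induction E using Finset.induction_on with
  | empty => rw [union_empty, extensions_self hρ, card_singleton, one_mul]
  | insert x E hxE ih =>
    by_cases hxD : x ∈ D
    · rwa [union_insert, insert_eq_of_mem (mem_union_left E hxD)]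
    have hx : x ∉ D ∪ E := by simp [hxD, hxE]
    have hfib : #(extensions (insert x (D ∪ E)) ρ) =
        ∑ ρ' ∈ extensions (D ∪ E) ρ, #(extensions (insert x (D ∪ E)) ρ') :=
      card_filter_rankings_eq_sum_card_extensions (subset_insert x (D ∪ E)) (ρ <+ ·)
        fun σ _ => (sublist_restrictWord_iff fun a ha => mem_union_left E (hρ.mem_iff.mp ha)).symm
    rw [union_insert, card_insert_of_notMem hx, factorial_succ, ← ih, hfib,
      sum_congr rfl fun ρ' hρ' => card_extensions_insert hx (mem_extensions.mp hρ').1,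
      sum_const, smul_eq_mul]
    ring

lemma card_filter_rankings_mul_factorial (hDC : D ⊆ C) (p : Word n → Prop) [DecidablePred p]
    (hp : ∀ σ, IsRanking C σ → (p σ ↔ p (restrictWord σ D))) :
    #((rankings n C).filter p) * (#D)! = #((rankings n D).filter p) * (#C)! := by
  rw [card_filter_rankings_eq_sum_card_extensions hDC p hp, sum_mul,
    sum_congr rfl fun ρ hρ =>
      card_extensions_mul_factorial hDC (mem_rankings.mp (mem_filter.mp hρ).1),
    sum_const, smul_eq_mul]

end extensions

section synth'

variable {B C : Finset (Fin n)} {F G : Word n → ℝ} {π σ τ : Word n}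

lemma memL_synth' (B : Finset (Fin n)) (F : Word n → ℝ) : MemL B (synth' B F) := by
  intro σ hσ
  by_contra h
  exact hσ (if_neg h)

lemma synth'_apply_of_memL (hBC : B ⊆ C) (hG : MemL B G) (hσ : IsRanking C σ) :
    synth' C G σ = ((#B)! / (#C)! : ℝ) * G (restrictWord σ B) := by
  have hres := isRanking_restrictWord hσ hBC
  rw [synth', if_pos hσ, sum_eq_single_of_mem _ (mem_allWords.mpr hres.1),
    if_pos (restrictWord_sublist σ B), hres.length_eq]
  intro ρ _ hρ
  split_ifs with hρσ
  · by_contra hne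
    exact hρ ((hG ρ (right_ne_zero_of_mul hne)).eq_restrictWord_of_sublist hσ.1 hρσ)
  · rfl

lemma synth'_synth' (hBC : B ⊆ C) (hF : ∀ π, F π ≠ 0 → ∀ a ∈ π, a ∈ B) :
    synth' C (synth' B F) = synth' C F := by
  funext σ
  by_cases hσ : IsRanking C σ
  · rw [synth'_apply_of_memL hBC (memL_synth' B F) hσ, synth', synth',
      if_pos (isRanking_restrictWord hσ hBC), if_pos hσ, mul_sum]
    refine sum_congr rfl fun π _ => ?_
    by_cases hπ : F π = 0
    · simp [hπ]
    simp only [sublist_restrictWord_iff (hF π hπ)]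
    split_ifs
    · field_simp
    · rw [mul_zero]
  · simp only [synth', if_neg hσ]

lemma synth'_dirac_apply (hπ : π.Nodup) :
    synth' C (dirac π) σ = if IsRanking C σ ∧ π <+ σ then ((π.length)! / (#C)! : ℝ) else 0 := by
  by_cases hσ : IsRanking C σ
  · rw [synth', if_pos hσ,
      sum_eq_single_of_mem π (mem_allWords.mpr hπ) fun ρ _ hρ => by simp [dirac, hρ]]
    by_cases hπσ : π <+ σ <;> simp [dirac, hσ, hπσ]
  · simp [synth', hσ]

lemma marg_synth'_dirac_apply (hπ : π.Nodup) (hτ : IsRanking B τ) :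
    marg B (synth' C (dirac π)) τ =
      #((rankings n C).filter fun σ => π <+ σ ∧ τ <+ σ) * ((π.length)! / (#C)! : ℝ) := by
  rw [marg, if_pos hτ, ← filter_isRanking_allWords, filter_filter, ← nsmul_eq_mul, ← sum_const,
    sum_filter]
  refine sum_congr rfl fun σ _ => ?_
  rw [synth'_dirac_apply hπ]
  by_cases hτσ : τ <+ σ <;> by_cases hπσ : π <+ σ <;> by_cases hσ : IsRanking C σ <;>
    simp [hτσ, hπσ, hσ]

lemma marg_synth'_dirac_eq_of_subset {D : Finset (Fin n)} (hπ : π.Nodup) (hπD : ∀ a ∈ π, a ∈ D)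
    (hBD : B ⊆ D) (hDC : D ⊆ C) :
    marg B (synth' C (dirac π)) = marg B (synth' D (dirac π)) := by
  funext τ
  by_cases hτ : IsRanking B τ
  · have hτD : ∀ a ∈ τ, a ∈ D := fun a ha => hBD (hτ.mem_iff.mp ha)
    have hcount := card_filter_rankings_mul_factorial hDC (fun σ => π <+ σ ∧ τ <+ σ)
      fun σ _ => by rw [sublist_restrictWord_iff hπD, sublist_restrictWord_iff hτD]
    have hcount' := congrArg (Nat.cast (R := ℝ)) hcount
    push_cast at hcount'
    rw [marg_synth'_dirac_apply hπ hτ, marg_synth'_dirac_apply hπ hτ]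
    field_simp
    linear_combination hcount'
  · simp [marg, hτ]

end synth'

lemma eq_of_dirac_ne_zero {π ρ : Word n} (h : dirac π ρ ≠ 0) : ρ = π := by
  by_contra hne
  exact h (if_neg hne)

theorem synth'_transitivity_general {n : ℕ}
    (A : Finset (Fin n)) (π : Word n) (hπ : IsRanking A π) :
    (∀ A' C : Finset (Fin n), A ⊆ A' → A' ⊆ C → 2 ≤ A'.card →
      synth' C (synth' A' (dirac π)) = synth' C (dirac π)) ∧
    (∀ B C : Finset (Fin n), 2 ≤ B.card → A ∪ B ⊆ C →
      marg B (synth' C (dirac π)) = marg B (synth' (A ∪ B) (dirac π))) := by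
  refine ⟨fun A' C hAA' hA'C _ => synth'_synth' hA'C ?_, fun B C _ hC => ?_⟩
  · intro ρ hρ a ha
    rw [eq_of_dirac_ne_zero hρ] at ha
    exact hAA' (hπ.mem_iff.mp ha)
  · exact marg_synth'_dirac_eq_of_subset hπ.1 (fun a ha => mem_union_left B (hπ.mem_iff.mp ha))
      subset_union_right hC

/-- **Transitivity and marginal-reduction properties of the alternative embedding:**
(1) `φ'_C (φ'_{A'} δ_π) = φ'_C δ_π` for `A ⊆ A' ⊆ C`;
(2) `M_B (φ'_C δ_π) = M_B (φ'_{A∪B} δ_π)` for `|B| ≥ 2` and `A ∪ B ⊆ C`. -/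
theorem synth'_transitivity {n : ℕ} (hn : 2 ≤ n)
    (A : Finset (Fin n)) (hA : 2 ≤ A.card) (π : Word n) (hπ : IsRanking A π) :
    (∀ A' C : Finset (Fin n), A ⊆ A' → A' ⊆ C → 2 ≤ A'.card →
      synth' C (synth' A' (dirac π)) = synth' C (dirac π)) ∧
    (∀ B C : Finset (Fin n), 2 ≤ B.card → A ∪ B ⊆ C →
      marg B (synth' C (dirac π)) = marg B (synth' (A ∪ B) (dirac π))) :=
  synth'_transitivity_general A π hπ
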